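/- Let d ≥ 5 be an integer and let G, H ∈ ℂ[t₀,t₁] be homogeneous of degree d−1, with coefficients G_{i,j} and H_{i,j}. Then t₀t₁·V_{d−2} + span_ℂ{t₀G, t₁G, t₀H, t₁H} = V_d if and only if the 4×2 complex matrix with rows (G_{d−1,0}, 0), (0, G_{0,d−1}), (H_{d−1,0}, 0), (0, H_{0,d−1}) has rank 2 (equivalently, (G_{d−1,0}, H_{d−1,0}) ≠ (0,0) and (G_{0,d−1}, H_{0,d−1}) ≠ (0,0)). -/

import Mathlib

open MvPolynomial

noncomputable section

/-- `V n` is the space of homogeneous polynomials of degree `n` in `ℂ[t₀,t₁]`. -/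
abbrev V (n : ℕ) : Submodule ℂ (MvPolynomial (Fin 2) ℂ) :=
  MvPolynomial.homogeneousSubmodule (Fin 2) ℂ n

/-- `coeff2 i j F` is the coefficient of the monomial `t₀^i t₁^j` in `F`. -/
def coeff2 (i j : ℕ) (F : MvPolynomial (Fin 2) ℂ) : ℂ :=
  MvPolynomial.coeff (Finsupp.single 0 i + Finsupp.single 1 j) F

namespace Stm2Aux

/-- The linear map recording the coefficients of `t₀^d` and `t₁^d`. -/
def phi (d : ℕ) : MvPolynomial (Fin 2) ℂ →ₗ[ℂ] (Fin 2 → ℂ) :=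
  LinearMap.pi fun i => lcoeff ℂ (Finsupp.single i d)

lemma phi_apply (d : ℕ) (p : MvPolynomial (Fin 2) ℂ) (i : Fin 2) :
    phi d p i = coeff (Finsupp.single i d) p := rfl

lemma degree_fin2 (m : Fin 2 →₀ ℕ) : m.degree = m 0 + m 1 := by
  rw [Finsupp.degree_apply, Finset.sum_subset (Finset.subset_univ _)
    (fun x _ hx => Finsupp.notMem_support_iff.mp hx)]
  exact Fin.sum_univ_two m

lemma single_sub_nat (a : Fin 2) (b c : ℕ) :
    Finsupp.single a b - Finsupp.single a c = Finsupp.single a (b - c) :=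
  Finsupp.single_tsub.symm

lemma phi_X0_mul (d : ℕ) (hd : 1 ≤ d) (G : MvPolynomial (Fin 2) ℂ) :
    phi d (X 0 * G) = ![coeff2 (d-1) 0 G, 0] := by
  funext i
  fin_cases i
  · show coeff (Finsupp.single (0 : Fin 2) d) (X 0 * G) = coeff2 (d-1) 0 G
    rw [coeff_X_mul']
    rw [if_pos (by simp [Finsupp.mem_support_iff]; omega)]
    rw [single_sub_nat]
    simp only [coeff2, Finsupp.single_zero, add_zero]
  · show coeff (Finsupp.single (1 : Fin 2) d) (X 0 * G) = 0
    rw [coeff_X_mul']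
    rw [if_neg (by simp [Finsupp.mem_support_iff, Finsupp.single_apply])]

lemma phi_X1_mul (d : ℕ) (hd : 1 ≤ d) (G : MvPolynomial (Fin 2) ℂ) :
    phi d (X 1 * G) = ![0, coeff2 0 (d-1) G] := by
  funext i
  fin_cases i
  · show coeff (Finsupp.single (0 : Fin 2) d) (X 1 * G) = 0
    rw [coeff_X_mul']
    rw [if_neg (by simp [Finsupp.mem_support_iff, Finsupp.single_apply])]
  · show coeff (Finsupp.single (1 : Fin 2) d) (X 1 * G) = coeff2 0 (d-1) G
    rw [coeff_X_mul']
    rw [if_pos (by simp [Finsupp.mem_support_iff]; omega)]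
    rw [single_sub_nat]
    simp only [coeff2, Finsupp.single_zero, zero_add]

lemma phi_X_pow (d : ℕ) (hd : d ≠ 0) (i : Fin 2) :
    phi d (X i ^ d) = Pi.single i 1 := by
  funext j
  show coeff (Finsupp.single j d) (X i ^ d) = _
  rw [X_pow_eq_monomial, coeff_monomial]
  rcases eq_or_ne i j with rfl | h
  · simp
  · rw [if_neg (fun hh => h ((Finsupp.single_left_inj hd).mp hh)),
      Pi.single_apply, if_neg (Ne.symm h)]

lemma phi_X0X1_mul (d : ℕ) (y : MvPolynomial (Fin 2) ℂ) :
    phi d (X 0 * X 1 * y) = 0 := by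
  funext i
  fin_cases i
  · show coeff (Finsupp.single (0 : Fin 2) d) (X 0 * X 1 * y) = 0
    rw [mul_assoc, coeff_X_mul']
    by_cases h : (0 : Fin 2) ∈ (Finsupp.single (0 : Fin 2) d).support
    · rw [if_pos h, coeff_X_mul', if_neg (by
        simp [Finsupp.mem_support_iff, Finsupp.single_apply, Finsupp.tsub_apply])]
    · rw [if_neg h]
  · show coeff (Finsupp.single (1 : Fin 2) d) (X 0 * X 1 * y) = 0
    rw [show (X 0 * X 1 * y : MvPolynomial (Fin 2) ℂ) = X 1 * (X 0 * y) by ring,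
      coeff_X_mul']
    by_cases h : (1 : Fin 2) ∈ (Finsupp.single (1 : Fin 2) d).support
    · rw [if_pos h, coeff_X_mul', if_neg (by
        simp [Finsupp.mem_support_iff, Finsupp.single_apply, Finsupp.tsub_apply])]
    · rw [if_neg h]

lemma W_le_V (d : ℕ) (hd : 2 ≤ d) :
    (V (d - 2)).map (LinearMap.mulLeft ℂ (X 0 * X 1 : MvPolynomial (Fin 2) ℂ)) ≤ V d := by
  rintro _ ⟨y, hy, rfl⟩
  rw [SetLike.mem_coe, mem_homogeneousSubmodule] at hy
  rw [LinearMap.mulLeft_apply, mem_homogeneousSubmodule]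
  have h2 : (X 0 * X 1 : MvPolynomial (Fin 2) ℂ).IsHomogeneous 2 :=
    (isHomogeneous_X ℂ 0).mul (isHomogeneous_X ℂ 1)
  have := h2.mul hy
  rwa [show 2 + (d - 2) = d by omega] at this

lemma XG_mem (d : ℕ) (hd : 1 ≤ d) (i : Fin 2) (G : MvPolynomial (Fin 2) ℂ)
    (hG : G ∈ V (d - 1)) : X i * G ∈ V d := by
  rw [mem_homogeneousSubmodule] at hG ⊢
  have := (isHomogeneous_X ℂ i).mul hG
  rwa [show 1 + (d - 1) = d by omega] at this

lemma Vd_le (d : ℕ) (hd : 2 ≤ d) :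
    V d ≤ (V (d - 2)).map (LinearMap.mulLeft ℂ (X 0 * X 1 : MvPolynomial (Fin 2) ℂ)) ⊔
      Submodule.span ℂ {(X 0 ^ d : MvPolynomial (Fin 2) ℂ), X 1 ^ d} := by
  intro p hp
  rw [mem_homogeneousSubmodule] at hp
  rw [← p.support_sum_monomial_coeff]
  refine Submodule.sum_mem _ fun m hm => ?_
  have hdeg : m.degree = d := by
    rw [Finsupp.degree_eq_weight_one]
    exact hp (mem_support_iff.mp hm)
  rw [degree_fin2] at hdeg
  by_cases h0 : m 0 = 0
  · have hm1 : m = Finsupp.single 1 d := by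
      ext j; fin_cases j <;> simp [Finsupp.single_apply, h0] <;> omega
    rw [show (monomial m (coeff m p)) =
        coeff m p • (X 1 ^ d : MvPolynomial (Fin 2) ℂ) by
      rw [hm1, X_pow_eq_monomial, smul_monomial, smul_eq_mul, mul_one]]
    exact Submodule.mem_sup_right (Submodule.smul_mem _ _
      (Submodule.subset_span (by simp)))
  by_cases h1 : m 1 = 0
  · have hm0 : m = Finsupp.single 0 d := by
      ext j; fin_cases j <;> simp [Finsupp.single_apply, h1] <;> omega
    rw [show (monomial m (coeff m p)) =
        coeff m p • (X 0 ^ d : MvPolynomial (Fin 2) ℂ) by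
      rw [hm0, X_pow_eq_monomial, smul_monomial, smul_eq_mul, mul_one]]
    exact Submodule.mem_sup_right (Submodule.smul_mem _ _
      (Submodule.subset_span (by simp)))
  · set m' : Fin 2 →₀ ℕ := m - Finsupp.single 0 1 - Finsupp.single 1 1 with hm'
    have hmm : Finsupp.single (0 : Fin 2) 1 + Finsupp.single (1 : Fin 2) 1 + m' = m := by
      ext j
      fin_cases j <;>
        simp [hm', Finsupp.single_apply, Finsupp.tsub_apply, Finsupp.add_apply] <;> omega
    have hdeg' : m'.degree = d - 2 := by
      rw [degree_fin2]
      have e0 : m' 0 = m 0 - 1 := by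
        simp [hm', Finsupp.tsub_apply, Finsupp.single_apply]
      have e1 : m' 1 = m 1 - 1 := by
        simp [hm', Finsupp.tsub_apply, Finsupp.single_apply]
      omega
    refine Submodule.mem_sup_left ⟨monomial m' (coeff m p), ?_, ?_⟩
    · rw [SetLike.mem_coe, mem_homogeneousSubmodule]
      exact isHomogeneous_monomial _ hdeg'
    · have hx : ∀ n : Fin 2, (X n : MvPolynomial (Fin 2) ℂ) =
          monomial (Finsupp.single n 1) 1 := fun n => by
        rw [← pow_one (X n), X_pow_eq_monomial]
      rw [LinearMap.mulLeft_apply, hx 0, hx 1, monomial_mul, monomial_mul,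
        one_mul, one_mul, hmm]

lemma top_of_singles {T : Submodule ℂ (Fin 2 → ℂ)}
    (h0 : (Pi.single 0 1 : Fin 2 → ℂ) ∈ T) (h1 : (Pi.single 1 1 : Fin 2 → ℂ) ∈ T) :
    T = ⊤ := by
  rw [eq_top_iff]
  intro v _
  have hv : v = v 0 • (Pi.single 0 1 : Fin 2 → ℂ) + v 1 • (Pi.single 1 1 : Fin 2 → ℂ) := by
    funext j
    fin_cases j <;> simp
  rw [hv]
  exact Submodule.add_mem _ (Submodule.smul_mem _ _ h0) (Submodule.smul_mem _ _ h1)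

end Stm2Aux

open Stm2Aux in
/-- Criterion of Case 1 of Theorem 3.3: `t₀t₁·V_{d-2} + <t₀G, t₁G, t₀H, t₁H> = V_d`
iff the matrix `M_Y` has rank 2. -/
theorem statement2 (d : ℕ) (hd : 5 ≤ d)
    (G H : MvPolynomial (Fin 2) ℂ)
    (hG : G ∈ V (d - 1)) (hH : H ∈ V (d - 1)) :
    ((V (d - 2)).map (LinearMap.mulLeft ℂ (X 0 * X 1 : MvPolynomial (Fin 2) ℂ)) ⊔
        Submodule.span ℂ {X 0 * G, X 1 * G, X 0 * H, X 1 * H} = V d)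
      ↔ Matrix.rank
          !![coeff2 (d - 1) 0 G, 0;
             0, coeff2 0 (d - 1) G;
             coeff2 (d - 1) 0 H, 0;
             0, coeff2 0 (d - 1) H] = 2 := by
  have hd1 : 1 ≤ d := by omega
  have hd2 : 2 ≤ d := by omega
  set A : Matrix (Fin 4) (Fin 2) ℂ :=
    !![coeff2 (d - 1) 0 G, 0;
       0, coeff2 0 (d - 1) G;
       coeff2 (d - 1) 0 H, 0;
       0, coeff2 0 (d - 1) H] with hA
  set W := (V (d - 2)).map (LinearMap.mulLeft ℂ (X 0 * X 1 : MvPolynomial (Fin 2) ℂ)) with hW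
  set S := Submodule.span ℂ
    ({X 0 * G, X 1 * G, X 0 * H, X 1 * H} : Set (MvPolynomial (Fin 2) ℂ)) with hS
  -- the image of `S` under `phi d` is the row span of `A`
  have r0 : A 0 = ![coeff2 (d-1) 0 G, 0] := by
    funext j; fin_cases j <;> simp [hA]
  have r1 : A 1 = ![0, coeff2 0 (d-1) G] := by
    funext j; fin_cases j <;> simp [hA]
  have r2 : A 2 = ![coeff2 (d-1) 0 H, 0] := by
    funext j; fin_cases j <;> simp [hA]
  have r3 : A 3 = ![0, coeff2 0 (d-1) H] := by
    funext j; fin_cases j <;> simp [hA]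
  have hrange : Set.range A =
      ({![coeff2 (d-1) 0 G, 0], ![0, coeff2 0 (d-1) G],
        ![coeff2 (d-1) 0 H, 0], ![0, coeff2 0 (d-1) H]} : Set (Fin 2 → ℂ)) := by
    have : Set.range A = {A 0, A 1, A 2, A 3} := by
      ext v
      constructor
      · rintro ⟨i, rfl⟩
        fin_cases i <;> simp
      · intro hv
        simp only [Set.mem_insert_iff, Set.mem_singleton_iff] at hv
        rcases hv with rfl | rfl | rfl | rfl
        exacts [⟨0, rfl⟩, ⟨1, rfl⟩, ⟨2, rfl⟩, ⟨3, rfl⟩]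
    rw [this, r0, r1, r2, r3]
  have hmapS : Submodule.map (phi d) S = Submodule.span ℂ (Set.range A) := by
    rw [hS, Submodule.map_span, hrange]
    congr 1
    simp only [Set.image_insert_eq, Set.image_singleton]
    rw [phi_X0_mul d hd1 G, phi_X1_mul d hd1 G, phi_X0_mul d hd1 H, phi_X1_mul d hd1 H]
  have hmapW : Submodule.map (phi d) W = ⊥ := by
    rw [eq_bot_iff]
    rintro _ ⟨x, hx, rfl⟩
    rcases hx with ⟨y, _, rfl⟩
    rw [LinearMap.mulLeft_apply]
    simp [phi_X0X1_mul d y]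
  -- rank A = 2 ↔ span of rows = ⊤
  have hrank_iff : A.rank = 2 ↔ Submodule.span ℂ (Set.range A) = ⊤ := by
    rw [Matrix.rank_eq_finrank_span_row]
    change Module.finrank ℂ (Submodule.span ℂ (Set.range A)) = 2 ↔ _
    constructor
    · intro h
      apply Submodule.eq_top_of_finrank_eq
      rw [h, Module.finrank_fin_fun]
    · intro h
      rw [h, finrank_top, Module.finrank_fin_fun]
  rw [hrank_iff]
  constructor
  · -- sup = V d → row span = ⊤
    intro h
    rw [← hmapS]
    have : Submodule.map (phi d) (W ⊔ S) = Submodule.map (phi d) (V d) := by rw [h]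
    rw [Submodule.map_sup, hmapW, bot_sup_eq] at this
    rw [this]
    apply top_of_singles
    · refine ⟨X 0 ^ d, ?_, phi_X_pow d (by omega) 0⟩
      rw [SetLike.mem_coe, mem_homogeneousSubmodule]
      simpa using (isHomogeneous_X ℂ (0 : Fin 2)).pow d
    · refine ⟨X 1 ^ d, ?_, phi_X_pow d (by omega) 1⟩
      rw [SetLike.mem_coe, mem_homogeneousSubmodule]
      simpa using (isHomogeneous_X ℂ (1 : Fin 2)).pow d
  · -- row span = ⊤ → sup = V d
    intro h
    have hSV : S ≤ V d := by
      rw [hS, Submodule.span_le]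
      rintro x (rfl | rfl | rfl | rfl)
      · exact XG_mem d hd1 0 G hG
      · exact XG_mem d hd1 1 G hG
      · exact XG_mem d hd1 0 H hH
      · exact XG_mem d hd1 1 H hH
    apply le_antisymm (sup_le (W_le_V d hd2) hSV)
    intro p hp
    have hφp : phi d p ∈ Submodule.map (phi d) S := by
      rw [hmapS, h]; trivial
    obtain ⟨q, hq, hq'⟩ := hφp
    have hpq : p - q ∈ V d := Submodule.sub_mem _ hp (hSV hq)
    obtain ⟨w, hw, s, hs, hws⟩ := Submodule.mem_sup.mp (Vd_le d hd2 hpq)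
    obtain ⟨b, c, hbc⟩ := Submodule.mem_span_pair.mp hs
    have hφw : phi d w = 0 := by
      rcases hw with ⟨y, _, rfl⟩
      rw [LinearMap.mulLeft_apply]
      exact phi_X0X1_mul d y
    have hφpq : phi d (p - q) = 0 := by
      rw [map_sub, hq', sub_self]
    have hbc0 : b = 0 ∧ c = 0 := by
      have := hφpq
      rw [← hws, ← hbc, map_add, hφw, zero_add, map_add, map_smul, map_smul,
        phi_X_pow d (by omega) 0, phi_X_pow d (by omega) 1] at this
      constructor
      · have := congrFun this 0; simpa using this
      · have := congrFun this 1; simpa using this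
    have hpw : p = w + q := by
      have : p - q = w := by
        rw [← hws, ← hbc, hbc0.1, hbc0.2, zero_smul, zero_smul, add_zero, add_zero]
      linear_combination (norm := module) this
    rw [hpw]
    exact Submodule.add_mem _ (Submodule.mem_sup_left hw) (Submodule.mem_sup_right hq)
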